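/- arXiv:1507.08344 — 3 statements merged into one kernel-verified Lean document; each statement's English description precedes it below -/
import Mathlib

section
/- Let M be a square complex matrix, n a positive integer, and θ a nonzero complex number. Then the dimension of the kernel of M^n − θI equals the sum, over all complex n-th roots μ of θ, of the dimension of the kernel of M − μI. -/
open Polynomial Module

lemma aux_ker_prod (d : ℕ) (f : Module.End ℂ (Fin d → ℂ)) (s : Finset ℂ) :
    Module.finrank ℂ (LinearMap.ker (aeval f (∏ μ ∈ s, (X - C μ)))) =
      ∑ μ ∈ s, Module.finrank ℂ (LinearMap.ker (f - μ • 1)) := by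
  classical
  induction s using Finset.induction with
  | empty => rw [Finset.prod_empty, map_one, Module.End.one_eq_id, LinearMap.ker_id]; simp
  | insert _ _ ha ih =>
    rename_i a s
    rw [Finset.prod_insert ha, Finset.sum_insert ha]
    have hcop : IsCoprime (X - C a) (∏ μ ∈ s, (X - C μ)) :=
      IsCoprime.prod_right fun μ hμ =>
        isCoprime_X_sub_C_of_isUnit_sub (sub_ne_zero_of_ne (by rintro rfl; exact ha hμ)).isUnit
    have hker := Polynomial.sup_ker_aeval_eq_ker_aeval_mul_of_coprime f hcop
    have hdisj := Polynomial.disjoint_ker_aeval_of_isCoprime f hcop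
    have hX : aeval f (X - C a) = f - a • 1 := by
      simp [Algebra.algebraMap_eq_smul_one]
    have hfr := Submodule.finrank_sup_add_finrank_inf_eq
      (LinearMap.ker (aeval f (X - C a))) (LinearMap.ker (aeval f (∏ μ ∈ s, (X - C μ))))
    rw [disjoint_iff.mp hdisj] at hfr
    simp only [finrank_bot, add_zero] at hfr
    rw [← hker, hfr, hX, ih]

lemma mulVecLin_eq_algEquiv (d : ℕ) (A : Matrix (Fin d) (Fin d) ℂ) :
    Matrix.mulVecLin A = Matrix.toLinAlgEquiv' A := rfl

/-- For a square complex matrix `M`, `n ≥ 1` and `θ ≠ 0`, the dimension of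
`ker (M^n - θ·I)` equals the sum over all `n`-th roots `μ` of `θ` of `dim ker (M - μ·I)`. -/
theorem dim_ker_pow_sub_smul_eq_sum_roots (d : ℕ) (M : Matrix (Fin d) (Fin d) ℂ)
    (n : ℕ) (hn : 1 ≤ n) (θ : ℂ) (hθ : θ ≠ 0) :
    Module.finrank ℂ (LinearMap.ker (Matrix.mulVecLin (M ^ n - θ • (1 : Matrix (Fin d) (Fin d) ℂ)))) =
      ∑ μ ∈ (Polynomial.nthRoots n θ).toFinset,
        Module.finrank ℂ (LinearMap.ker (Matrix.mulVecLin (M - μ • (1 : Matrix (Fin d) (Fin d) ℂ)))) := by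
  classical
  have hn0 : n ≠ 0 := by omega
  have hsep : (X ^ n - C θ : ℂ[X]).Separable :=
    separable_X_pow_sub_C θ (by exact_mod_cast (Nat.cast_ne_zero (R := ℂ)).mpr hn0) hθ
  have hnodup : (nthRoots n θ).Nodup := nodup_roots hsep
  have hmonic : (X ^ n - C θ : ℂ[X]).Monic := monic_X_pow_sub_C θ hn0
  have hfact : (X ^ n - C θ : ℂ[X]) = ∏ μ ∈ (nthRoots n θ).toFinset, (X - C μ) := by
    conv_lhs => rw [(IsAlgClosed.splits _).eq_prod_roots_of_monic hmonic]
    rw [Finset.prod, Multiset.toFinset_val, Multiset.dedup_eq_self.mpr hnodup]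
    rfl
  have haev : ∀ p : ℂ[X], Matrix.mulVecLin (aeval M p) = aeval (Matrix.mulVecLin M) p := by
    intro p
    rw [mulVecLin_eq_algEquiv, mulVecLin_eq_algEquiv, ← aeval_algHom_apply]
  have h1 : M ^ n - θ • 1 = aeval M (X ^ n - C θ : ℂ[X]) := by
    simp [Algebra.algebraMap_eq_smul_one]
  have h2 : ∀ μ : ℂ, Matrix.mulVecLin (M - μ • 1) = Matrix.mulVecLin M - μ • 1 := by
    intro μ
    have : M - μ • 1 = aeval M (X - C μ : ℂ[X]) := by simp [Algebra.algebraMap_eq_smul_one]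
    rw [this, haev]
    simp [Algebra.algebraMap_eq_smul_one]
  rw [h1, haev, hfact, aux_ker_prod]
  exact Finset.sum_congr rfl fun μ _ => by rw [h2]
end

section
/- Let h be a Hermitian form on ℂ^d with associated matrix H, and V ⊆ ℂ^d a subspace. Then nul(h) = nul(h restricted to V^h) − dim(V ∩ V^h) + dim(V ∩ ker H), where nul denotes the dimension of the kernel of the (restricted) form. -/
/-- The `h`-orthogonal of a subspace `V ⊆ ℂ^d` with respect to the Hermitian form
`h(v,w) = ⟨Hv, w⟩` associated to a matrix `H`. -/
def hOrth (d : ℕ) (H : Matrix (Fin d) (Fin d) ℂ)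
    (V : Submodule ℂ (EuclideanSpace ℂ (Fin d))) : Submodule ℂ (EuclideanSpace ℂ (Fin d)) where
  carrier := {w | ∀ v ∈ V, inner ℂ (Matrix.toEuclideanLin H w) v = (0 : ℂ)}
  zero_mem' := by simp
  add_mem' := by
    intro a b ha hb v hv
    rw [map_add, inner_add_left, ha v hv, hb v hv, add_zero]
  smul_mem' := by
    intro c x hx v hv
    rw [map_smul, inner_smul_left, hx v hv, mul_zero]

lemma hOrth_eq_comap (d : ℕ) (H : Matrix (Fin d) (Fin d) ℂ)
    (V : Submodule ℂ (EuclideanSpace ℂ (Fin d))) :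
    hOrth d H V = Submodule.comap (Matrix.toEuclideanLin H) Vᗮ := by
  ext w
  simp only [Submodule.mem_comap, Submodule.mem_orthogonal]
  constructor
  · intro h v hv; rw [← inner_eq_zero_symm]; exact h v hv
  · intro h v hv; rw [inner_eq_zero_symm]; exact h v hv

lemma hOrth_eq_orth_map (d : ℕ) (H : Matrix (Fin d) (Fin d) ℂ) (hH : H.IsHermitian)
    (V : Submodule ℂ (EuclideanSpace ℂ (Fin d))) :
    hOrth d H V = (Submodule.map (Matrix.toEuclideanLin H) V)ᗮ := by
  have hs := Matrix.isHermitian_iff_isSymmetric.1 hH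
  rw [hOrth_eq_comap]
  ext w
  simp only [Submodule.mem_comap, Submodule.mem_orthogonal, Submodule.mem_map]
  constructor
  · rintro h _ ⟨v, hv, rfl⟩
    rw [hs v w]; exact h v hv
  · intro h v hv
    rw [← hs v w]
    exact h _ ⟨v, hv, rfl⟩

/-- For a Hermitian matrix `H` on `ℂ^d` and a subspace `V` with
`h`-orthogonal `V^h`, the nullities satisfy
`nul(h) = nul(h|_{V^h}) − dim(V ∩ V^h) + dim(V ∩ ker H)`, where the kernel of the
restriction of `h` to a subspace `W` is `W ⊓ W^h`. -/
theorem nul_restricted_form (d : ℕ) (H : Matrix (Fin d) (Fin d) ℂ) (hH : H.IsHermitian)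
    (V : Submodule ℂ (EuclideanSpace ℂ (Fin d))) :
    (Module.finrank ℂ (LinearMap.ker (Matrix.toEuclideanLin H)) : ℤ) =
      (Module.finrank ℂ ↥(hOrth d H V ⊓ hOrth d H (hOrth d H V)) : ℤ)
        - (Module.finrank ℂ ↥(V ⊓ hOrth d H V) : ℤ)
        + (Module.finrank ℂ ↥(V ⊓ LinearMap.ker (Matrix.toEuclideanLin H)) : ℤ) := by
  set f := Matrix.toEuclideanLin H with hf
  set K := LinearMap.ker f with hK
  set A := hOrth d H V with hA
  have hKA : K ≤ A := by
    intro k hk v hv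
    rw [LinearMap.mem_ker] at hk
    rw [← hf, hk, inner_zero_left]
  -- hOrth A = V ⊔ K
  have h1 : hOrth d H A = V ⊔ K := by
    rw [hOrth_eq_comap, hA, hOrth_eq_orth_map d H hH, Submodule.orthogonal_orthogonal,
      Submodule.comap_map_eq]
  have h2 : A ⊓ hOrth d H A = (V ⊓ A) ⊔ K := by
    rw [h1, ← inf_sup_assoc_of_le V hKA, inf_comm A V]
  have h3 : (V ⊓ A) ⊓ K = V ⊓ K := by
    rw [inf_assoc, inf_eq_right.2 hKA]
  have h4 := Submodule.finrank_sup_add_finrank_inf_eq (V ⊓ A) K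
  rw [h3] at h4
  rw [h2]
  have h5 := congrArg (Nat.cast : ℕ → ℤ) h4
  push_cast at h5
  linarith
end

section
/- Let H be a 2dk×2dk real symmetric matrix whose action Z' = HZ on Z = (X_0,Y_0,…,X_{k−1},Y_{k−1}) ∈ (ℝ^{2d})^k is given by X'_j = Y_{j−1} − Y_j + A_{j−1}X_j + B_{j−1}^T Y_{j−1} and Y'_j = X_{j+1} − X_j + B_j X_{j+1} + C_j Y_j (indices mod k), where A_j, B_j, C_j are d×d matrices each of operator norm at most ε < 1 (A_j, C_j symmetric). Then the quadratic form Z ↦ ⟨HZ, Z⟩ is negative definite on the subspace {Z : Z_j = 0 for all even j, and Y_h = X_h for all odd h}, and positive definite on {Z : Z_j = 0 for all even j, and Y_h = −X_h for all odd h}. Consequently the index and coindex of the form are each at least d·⌊k/2⌋. -/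
/-- The index of a quadratic form `q` on a real module: the maximal dimension of a
subspace on which `q` is negative definite. -/
noncomputable def qIndex {M : Type*} [AddCommGroup M] [Module ℝ M] (q : M → ℝ) : ℕ :=
  sSup {n | ∃ W : Submodule ℝ M, Module.finrank ℝ W = n ∧ ∀ w ∈ W, w ≠ 0 → q w < 0}

/-- The coindex of a quadratic form `q` on a real module: the maximal dimension of a
subspace on which `q` is positive definite. -/
noncomputable def qCoindex {M : Type*} [AddCommGroup M] [Module ℝ M] (q : M → ℝ) : ℕ :=
  sSup {n | ∃ W : Submodule ℝ M, Module.finrank ℝ W = n ∧ ∀ w ∈ W, w ≠ 0 → 0 < q w}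

/-- If `j` has odd residue, its neighbours `j ± 1` have even residue. -/
theorem neighbor_even (k : ℕ) [NeZero k] (j : ZMod k) (h : Odd j.val) :
    Even (j - 1).val ∧ Even (j + 1).val := by
  have hjv : j.val < k := ZMod.val_lt j
  obtain ⟨m, hm⟩ := h
  have h1 : 1 ≤ j.val := by omega
  have hj : ((j.val : ℕ) : ZMod k) = j := by rw [ZMod.natCast_val, ZMod.cast_id]
  constructor
  · have hrw : j - 1 = ((j.val - 1 : ℕ) : ZMod k) := by
      rw [Nat.cast_sub h1, Nat.cast_one, hj]
    rw [hrw, ZMod.val_cast_of_lt (by omega)]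
    exact ⟨m, by omega⟩
  · have hrw : j + 1 = ((j.val + 1 : ℕ) : ZMod k) := by
      rw [Nat.cast_add, Nat.cast_one, hj]
    rcases eq_or_lt_of_le (Nat.succ_le_of_lt hjv) with he | hl
    · have hz : j + 1 = 0 := by
        rw [hrw, show j.val + 1 = k from he, ZMod.natCast_self]
      rw [hz, ZMod.val_zero]; exact Even.zero
    · rw [hrw, ZMod.val_cast_of_lt hl]
      exact ⟨m + 1, by omega⟩

/-- The `i`-th odd residue in `ZMod k`. -/
def oddIdx (k : ℕ) (i : Fin (k/2)) : ZMod k := ((2*i.val+1 : ℕ) : ZMod k)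

theorem oddIdx_val (k : ℕ) [NeZero k] (i : Fin (k/2)) :
    (oddIdx k i).val = 2*i.val+1 := by
  have := i.isLt
  have h2 : 2 * (k/2) ≤ k := Nat.mul_div_le k 2
  exact ZMod.val_cast_of_lt (by omega)

theorem oddIdx_odd (k : ℕ) [NeZero k] (i : Fin (k/2)) : Odd (oddIdx k i).val := by
  rw [oddIdx_val]; exact ⟨i.val, by ring⟩

theorem oddIdx_inj (k : ℕ) [NeZero k] : Function.Injective (oddIdx k) := by
  intro i i' h
  have := congrArg ZMod.val h
  rw [oddIdx_val, oddIdx_val] at this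
  exact Fin.ext (by omega)

/-- The embedding of `(ℝ^d)^{⌊k/2⌋}` into the subspace supported on odd residues,
with `Y = σ • X`. -/
noncomputable def embMap (d k : ℕ) [NeZero k] (σ : ℝ) :
    (Fin (k/2) → EuclideanSpace ℝ (Fin d)) →ₗ[ℝ]
      ((ZMod k → EuclideanSpace ℝ (Fin d)) × (ZMod k → EuclideanSpace ℝ (Fin d))) where
  toFun f := (fun j => ∑ i : Fin (k/2), if j = oddIdx k i then f i else 0,
              fun j => σ • ∑ i : Fin (k/2), if j = oddIdx k i then f i else 0)
  map_add' f g := by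
    have base : ∀ j : ZMod k,
        (∑ i : Fin (k/2), if j = oddIdx k i then (f + g) i else 0)
        = (∑ i : Fin (k/2), if j = oddIdx k i then f i else 0)
          + (∑ i : Fin (k/2), if j = oddIdx k i then g i else 0) := by
      intro j
      rw [← Finset.sum_add_distrib]
      exact Finset.sum_congr rfl fun i _ => by split <;> simp
    refine Prod.ext (funext fun j => ?_) (funext fun j => ?_)
    · exact base j
    · show σ • (_ : EuclideanSpace ℝ (Fin d)) = σ • (_ : EuclideanSpace ℝ (Fin d)) + σ • (_ : EuclideanSpace ℝ (Fin d))
      rw [base j, smul_add]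
  map_smul' c f := by
    have base : ∀ j : ZMod k,
        (∑ i : Fin (k/2), if j = oddIdx k i then (c • f) i else 0)
        = c • (∑ i : Fin (k/2), if j = oddIdx k i then f i else 0) := by
      intro j
      rw [Finset.smul_sum]
      exact Finset.sum_congr rfl fun i _ => by split <;> simp
    refine Prod.ext (funext fun j => ?_) (funext fun j => ?_)
    · exact base j
    · show σ • (_ : EuclideanSpace ℝ (Fin d)) = c • (σ • (_ : EuclideanSpace ℝ (Fin d)))
      rw [base j, smul_comm]

theorem embMap_apply_oddIdx (d k : ℕ) [NeZero k] (σ : ℝ)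
    (f : Fin (k/2) → EuclideanSpace ℝ (Fin d)) (i : Fin (k/2)) :
    (embMap d k σ f).1 (oddIdx k i) = f i := by
  simp only [embMap, LinearMap.coe_mk, AddHom.coe_mk]
  rw [Finset.sum_eq_single i]
  · simp
  · intro i' _ hne
    rw [if_neg]
    intro h
    exact hne (oddIdx_inj k h.symm)
  · simp

theorem embMap_inj (d k : ℕ) [NeZero k] (σ : ℝ) : Function.Injective (embMap d k σ) := by
  rw [← LinearMap.ker_eq_bot, LinearMap.ker_eq_bot']
  intro f hf
  funext i
  have h1 := congrArg (fun Z => Z.1 (oddIdx k i)) hf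
  simpa [embMap_apply_oddIdx] using h1

theorem embMap_even (d k : ℕ) [NeZero k] (σ : ℝ)
    (f : Fin (k/2) → EuclideanSpace ℝ (Fin d)) (j : ZMod k) (hj : Even j.val) :
    (embMap d k σ f).1 j = 0 ∧ (embMap d k σ f).2 j = 0 := by
  have hz : (∑ i : Fin (k/2), if j = oddIdx k i then f i else 0) = 0 := by
    apply Finset.sum_eq_zero
    intro i _
    rw [if_neg]
    rintro rfl
    exact (Nat.not_odd_iff_even.mpr hj) (oddIdx_odd k i)
  constructor
  · simpa [embMap] using hz
  · simp [embMap, hz]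

theorem embMap_snd (d k : ℕ) [NeZero k] (σ : ℝ)
    (f : Fin (k/2) → EuclideanSpace ℝ (Fin d)) (j : ZMod k) :
    (embMap d k σ f).2 j = σ • (embMap d k σ f).1 j := rfl

open Matrix in
/-- Let `H` be the symmetric bilinear form on `(ℝ^{2d})^k` given by
`⟨HZ, Z⟩ = Σ_j (⟨X'_j, X_j⟩ + ⟨Y'_j, Y_j⟩)` with
`X'_j = Y_{j−1} − Y_j + A_{j−1}X_j + B_{j−1}ᵀY_{j−1}` and
`Y'_j = X_{j+1} − X_j + B_jX_{j+1} + C_jY_j` (indices mod `k`), where the `d×d` matrices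
`A_j, B_j, C_j` have operator norm at most `ε < 1` and `A_j, C_j` are symmetric.
Then the quadratic form `Z ↦ ⟨HZ, Z⟩` is negative definite on
`{Z : Z_j = 0 ∀ j even, Y_h = X_h ∀ h odd}` and positive definite on
`{Z : Z_j = 0 ∀ j even, Y_h = −X_h ∀ h odd}`; consequently its index and coindex are
each at least `d·⌊k/2⌋`. -/
theorem morse_index_always_large (d k : ℕ) (hd : 0 < d) [NeZero k] (ε : ℝ) (hε : ε < 1)
    (A B C : ZMod k → Matrix (Fin d) (Fin d) ℝ)
    (hAsymm : ∀ j, (A j).IsSymm) (hCsymm : ∀ j, (C j).IsSymm)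
    (hA : ∀ j, ‖Matrix.toEuclideanCLM (𝕜 := ℝ) (A j)‖ ≤ ε)
    (hB : ∀ j, ‖Matrix.toEuclideanCLM (𝕜 := ℝ) (B j)‖ ≤ ε)
    (hC : ∀ j, ‖Matrix.toEuclideanCLM (𝕜 := ℝ) (C j)‖ ≤ ε)
    (Q : (ZMod k → EuclideanSpace ℝ (Fin d)) × (ZMod k → EuclideanSpace ℝ (Fin d)) → ℝ)
    (hQ : ∀ Z, Q Z = ∑ j : ZMod k,
      ((inner ℝ (Z.2 (j - 1) - Z.2 j + Matrix.toEuclideanLin (A (j - 1)) (Z.1 j)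
          + Matrix.toEuclideanLin (B (j - 1))ᵀ (Z.2 (j - 1))) (Z.1 j) : ℝ)
      + (inner ℝ (Z.1 (j + 1) - Z.1 j + Matrix.toEuclideanLin (B j) (Z.1 (j + 1))
          + Matrix.toEuclideanLin (C j) (Z.2 j)) (Z.2 j) : ℝ))) :
    (∀ Z : (ZMod k → EuclideanSpace ℝ (Fin d)) × (ZMod k → EuclideanSpace ℝ (Fin d)),
        (∀ j : ZMod k, (Even j.val → Z.1 j = 0 ∧ Z.2 j = 0) ∧ (Odd j.val → Z.2 j = Z.1 j)) →
        Z ≠ 0 → Q Z < 0) ∧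
    (∀ Z : (ZMod k → EuclideanSpace ℝ (Fin d)) × (ZMod k → EuclideanSpace ℝ (Fin d)),
        (∀ j : ZMod k, (Even j.val → Z.1 j = 0 ∧ Z.2 j = 0) ∧ (Odd j.val → Z.2 j = -Z.1 j)) →
        Z ≠ 0 → 0 < Q Z) ∧
    d * (k / 2) ≤ qIndex Q ∧ d * (k / 2) ≤ qCoindex Q := by
  have hbound : ∀ (M : Matrix (Fin d) (Fin d) ℝ) (x : EuclideanSpace ℝ (Fin d)),
      ‖Matrix.toEuclideanCLM (𝕜 := ℝ) M‖ ≤ ε →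
      |(inner ℝ (Matrix.toEuclideanLin M x) x : ℝ)| ≤ ε * ‖x‖^2 := by
    intro M x h
    have h1 : Matrix.toEuclideanLin M x = Matrix.toEuclideanCLM (𝕜 := ℝ) M x := by
      rw [← Matrix.coe_toEuclideanCLM_eq_toEuclideanLin]; rfl
    rw [h1]
    calc |(inner ℝ (Matrix.toEuclideanCLM (𝕜 := ℝ) M x) x : ℝ)|
        ≤ ‖Matrix.toEuclideanCLM (𝕜 := ℝ) M x‖ * ‖x‖ := abs_real_inner_le_norm _ _
      _ ≤ (‖Matrix.toEuclideanCLM (𝕜 := ℝ) M‖ * ‖x‖) * ‖x‖ := by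
          gcongr; exact ContinuousLinearMap.le_opNorm _ _
      _ ≤ (ε * ‖x‖) * ‖x‖ := by gcongr
      _ = ε * ‖x‖^2 := by ring
  -- Negative definiteness on the `Y = X` subspace
  have hneg : ∀ Z : (ZMod k → EuclideanSpace ℝ (Fin d)) × (ZMod k → EuclideanSpace ℝ (Fin d)),
      (∀ j : ZMod k, (Even j.val → Z.1 j = 0 ∧ Z.2 j = 0) ∧ (Odd j.val → Z.2 j = Z.1 j)) →
      Z ≠ 0 → Q Z < 0 := by
    intro Z hZ hZne
    obtain ⟨j0, hj0, hj0ne⟩ : ∃ j : ZMod k, Odd j.val ∧ Z.1 j ≠ 0 := by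
      by_contra hcon
      push_neg at hcon
      apply hZne
      have h1 : Z.1 = 0 := funext fun j => by
        rcases Nat.even_or_odd j.val with he | ho
        · exact ((hZ j).1 he).1
        · exact hcon j ho
      have h2 : Z.2 = 0 := funext fun j => by
        rcases Nat.even_or_odd j.val with he | ho
        · exact ((hZ j).1 he).2
        · rw [(hZ j).2 ho]; exact congrFun h1 j
      exact Prod.ext h1 h2
    have key : ∀ j : ZMod k, Odd j.val →
        ((inner ℝ (Z.2 (j - 1) - Z.2 j + Matrix.toEuclideanLin (A (j - 1)) (Z.1 j)
            + Matrix.toEuclideanLin (B (j - 1))ᵀ (Z.2 (j - 1))) (Z.1 j) : ℝ)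
        + (inner ℝ (Z.1 (j + 1) - Z.1 j + Matrix.toEuclideanLin (B j) (Z.1 (j + 1))
            + Matrix.toEuclideanLin (C j) (Z.2 j)) (Z.2 j) : ℝ))
        ≤ 2 * (ε - 1) * ‖Z.1 j‖^2 := by
      intro j hj
      obtain ⟨hm1, hp1⟩ := neighbor_even k j hj
      have e1 : Z.2 (j - 1) = 0 := ((hZ (j-1)).1 hm1).2
      have e2 : Z.1 (j + 1) = 0 := ((hZ (j+1)).1 hp1).1
      have e3 : Z.2 j = Z.1 j := (hZ j).2 hj
      have hA' := abs_le.mp (hbound (A (j-1)) (Z.1 j) (hA (j-1)))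
      have hC' := abs_le.mp (hbound (C j) (Z.1 j) (hC j))
      rw [e1, e2, e3]
      simp only [map_zero, zero_sub, add_zero, zero_add, inner_add_left, inner_sub_left,
        inner_zero_left, inner_neg_left, real_inner_self_eq_norm_sq]
      nlinarith [hA'.2, hC'.2]
    rw [hQ]
    have h0 : (0:ℝ) = ∑ _j : ZMod k, (0:ℝ) := by simp
    rw [h0]
    apply Finset.sum_lt_sum
    · intro j _
      rcases Nat.even_or_odd j.val with he | ho
      · obtain ⟨e1, e2⟩ := (hZ j).1 he
        simp [e1, e2]
      · refine le_trans (key j ho) ?_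
        nlinarith [sq_nonneg ‖Z.1 j‖]
    · refine ⟨j0, Finset.mem_univ _, lt_of_le_of_lt (key j0 hj0) ?_⟩
      have : 0 < ‖Z.1 j0‖ := norm_pos_iff.mpr hj0ne
      nlinarith [mul_pos (by linarith : (0:ℝ) < 1 - ε) (pow_pos this 2)]
  -- Positive definiteness on the `Y = -X` subspace
  have hpos : ∀ Z : (ZMod k → EuclideanSpace ℝ (Fin d)) × (ZMod k → EuclideanSpace ℝ (Fin d)),
      (∀ j : ZMod k, (Even j.val → Z.1 j = 0 ∧ Z.2 j = 0) ∧ (Odd j.val → Z.2 j = -Z.1 j)) →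
      Z ≠ 0 → 0 < Q Z := by
    intro Z hZ hZne
    obtain ⟨j0, hj0, hj0ne⟩ : ∃ j : ZMod k, Odd j.val ∧ Z.1 j ≠ 0 := by
      by_contra hcon
      push_neg at hcon
      apply hZne
      have h1 : Z.1 = 0 := funext fun j => by
        rcases Nat.even_or_odd j.val with he | ho
        · exact ((hZ j).1 he).1
        · exact hcon j ho
      have h2 : Z.2 = 0 := funext fun j => by
        rcases Nat.even_or_odd j.val with he | ho
        · exact ((hZ j).1 he).2
        · rw [(hZ j).2 ho, congrFun h1 j]; simp
      exact Prod.ext h1 h2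
    have key : ∀ j : ZMod k, Odd j.val →
        2 * (1 - ε) * ‖Z.1 j‖^2 ≤
        ((inner ℝ (Z.2 (j - 1) - Z.2 j + Matrix.toEuclideanLin (A (j - 1)) (Z.1 j)
            + Matrix.toEuclideanLin (B (j - 1))ᵀ (Z.2 (j - 1))) (Z.1 j) : ℝ)
        + (inner ℝ (Z.1 (j + 1) - Z.1 j + Matrix.toEuclideanLin (B j) (Z.1 (j + 1))
            + Matrix.toEuclideanLin (C j) (Z.2 j)) (Z.2 j) : ℝ)) := by
      intro j hj
      obtain ⟨hm1, hp1⟩ := neighbor_even k j hj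
      have e1 : Z.2 (j - 1) = 0 := ((hZ (j-1)).1 hm1).2
      have e2 : Z.1 (j + 1) = 0 := ((hZ (j+1)).1 hp1).1
      have e3 : Z.2 j = -Z.1 j := (hZ j).2 hj
      have hA' := abs_le.mp (hbound (A (j-1)) (Z.1 j) (hA (j-1)))
      have hC' := abs_le.mp (hbound (C j) (Z.1 j) (hC j))
      rw [e1, e2, e3]
      simp only [map_zero, map_neg, zero_sub, add_zero, zero_add, inner_add_left,
        inner_sub_left, inner_zero_left, inner_neg_left, inner_neg_right, sub_neg_eq_add,
        neg_neg, real_inner_self_eq_norm_sq]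
      nlinarith [hA'.1, hC'.1]
    rw [hQ]
    have h0 : (0:ℝ) = ∑ _j : ZMod k, (0:ℝ) := by simp
    rw [h0]
    apply Finset.sum_lt_sum
    · intro j _
      rcases Nat.even_or_odd j.val with he | ho
      · obtain ⟨e1, e2⟩ := (hZ j).1 he
        simp [e1, e2]
      · refine le_trans ?_ (key j ho)
        nlinarith [sq_nonneg ‖Z.1 j‖]
    · refine ⟨j0, Finset.mem_univ _, lt_of_lt_of_le ?_ (key j0 hj0)⟩
      have : 0 < ‖Z.1 j0‖ := norm_pos_iff.mpr hj0ne
      nlinarith [mul_pos (by linarith : (0:ℝ) < 1 - ε) (pow_pos this 2)]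
  refine ⟨hneg, hpos, ?_, ?_⟩
  · -- index bound
    have hfr : Module.finrank ℝ
        (↥(LinearMap.range (embMap d k 1))) = d * (k / 2) := by
      rw [LinearMap.finrank_range_of_inj (embMap_inj d k 1),
        Module.finrank_pi_fintype]
      simp [finrank_euclideanSpace_fin, mul_comm]
    refine le_csSup ?_ ?_
    · refine ⟨Module.finrank ℝ
        ((ZMod k → EuclideanSpace ℝ (Fin d)) × (ZMod k → EuclideanSpace ℝ (Fin d))),
        fun n hn => ?_⟩
      obtain ⟨W, hW, -⟩ := hn
      exact hW ▸ W.finrank_le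
    · refine ⟨LinearMap.range (embMap d k 1), hfr, ?_⟩
      rintro w ⟨f, rfl⟩ hne
      refine hneg _ (fun j => ⟨embMap_even d k 1 f j, fun _ => ?_⟩) hne
      rw [embMap_snd, one_smul]
  · -- coindex bound
    have hfr : Module.finrank ℝ
        (↥(LinearMap.range (embMap d k (-1)))) = d * (k / 2) := by
      rw [LinearMap.finrank_range_of_inj (embMap_inj d k (-1)),
        Module.finrank_pi_fintype]
      simp [finrank_euclideanSpace_fin, mul_comm]
    refine le_csSup ?_ ?_
    · refine ⟨Module.finrank ℝ
        ((ZMod k → EuclideanSpace ℝ (Fin d)) × (ZMod k → EuclideanSpace ℝ (Fin d))),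
        fun n hn => ?_⟩
      obtain ⟨W, hW, -⟩ := hn
      exact hW ▸ W.finrank_le
    · refine ⟨LinearMap.range (embMap d k (-1)), hfr, ?_⟩
      rintro w ⟨f, rfl⟩ hne
      refine hpos _ (fun j => ⟨embMap_even d k (-1) f j, fun _ => ?_⟩) hne
      rw [embMap_snd, neg_one_smul]
end
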